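/- arXiv:1911.06769 — 5 statements merged into one kernel-verified Lean document; each statement's English description precedes it below -/
import Mathlib

section
/- For every x > 0, liminf_{T→∞} (1/T) ln P(ξ_T(1) > x) ≥ −I(x). -/
open MeasureTheory ProbabilityTheory Filter

/-- Transition probabilities of the population chain with linear growth and
uniform catastrophes. -/
noncomputable def transP (lam mu : ℝ) (i j : ℕ) : ℝ :=
  if i = 0 then (if j = 1 then 1 else 0)
  else if j = i + 1 then lam / (lam + mu)
  else if j < i then mu / (i * (lam + mu))
  else 0

/-- `eta` is (a realization of) the Markov chain started at `0` with
transition probabilities `transP lam mu`. -/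
def IsCatastropheChain {Ω : Type*} [MeasureSpace Ω] (lam mu : ℝ)
    (eta : Ω → ℕ → ℕ) : Prop :=
  (∀ k, Measurable fun ω => eta ω k) ∧
  (ℙ {ω | eta ω 0 = 0} = 1) ∧
  (∀ (k : ℕ) (f : ℕ → ℕ) (j : ℕ),
    ℙ {ω | eta ω (k + 1) = j ∧ ∀ l ≤ k, eta ω l = f l}
      = ENNReal.ofReal (transP lam mu (f k) j) * ℙ {ω | ∀ l ≤ k, eta ω l = f l})

/-- `N` is a Poisson random variable with mean `m`. -/
noncomputable def IsPoissonRV {Ω : Type*} [MeasureSpace Ω] (m : ℝ) (N : Ω → ℕ) : Prop :=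
  Measurable N ∧
  ∀ k : ℕ, ℙ {ω | N ω = k} = ENNReal.ofReal (Real.exp (-m) * m ^ k / (Nat.factorial k))

/-- The rate function of the LDP. -/
noncomputable def rateI (lam mu alpha : ℝ) (x : ℝ) : EReal :=
  if x < 0 then ⊤
  else if x < alpha then ((x * Real.log ((lam + mu) / lam) : ℝ) : EReal)
  else ((x * Real.log (x * (lam + mu) / (alpha * lam)) - x + alpha : ℝ) : EReal)

/-! On the event that `N_T = n_T := ⌊max(α, x) T⌋ + 1` and that `η` makes `m_T := ⌊x T⌋ + 1`
consecutive up-steps ending at time `n_T`, we have `ξ_T(1) > x`. The two requirements are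
independent. The first has probability `e^{-αT} (αT)^{n_T} / n_T!`, which by Stirling's formula
decays at exponential rate `max(α, x) log (max(α, x) / α) - max(α, x) + α`. Whatever the past, an
up-step has probability at least `p = λ / (λ + μ)`, so the second has probability at least
`p ^ m_T`, of rate `x log (1 / p)`. The two rates add up to `I(x)`. -/

open Real Topology
open scoped Nat

lemma Real.log_factorial_le (n : ℕ) : log n ! ≤ n * log n - n + log n / 2 + 1 := by
  rcases n with _ | k
  · simp
  have hseq : Stirling.stirlingSeq (k + 1) ≤ Stirling.stirlingSeq 1 :=
    Stirling.stirlingSeq'_antitone (Nat.zero_le k)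
  have hlog := log_le_log (Stirling.stirlingSeq'_pos k) hseq
  rw [Stirling.log_stirlingSeq_formula, Stirling.stirlingSeq_one,
    log_div (exp_pos 1).ne' (by positivity), log_exp, log_sqrt zero_le_two,
    log_mul two_ne_zero (by positivity), log_div (by positivity) (exp_pos 1).ne', log_exp] at hlog
  linarith

lemma Real.mul_log_sub_le_log_factorial (n : ℕ) : n * log n - n ≤ log n ! := by
  rcases eq_or_ne n 0 with rfl | hn
  · simp
  have h := Stirling.le_log_factorial_stirling hn
  have : 0 ≤ log n := log_natCast_nonneg n
  have : 0 ≤ log (2 * π) := log_nonneg (by linarith [pi_gt_three])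
  linarith

lemma tendsto_log_div_of_tendsto_div {f : ℝ → ℝ} {c : ℝ} (hc : 0 < c)
    (hf : Tendsto (fun T => f T / T) atTop (𝓝 c)) :
    Tendsto (fun T => log (f T) / T) atTop (𝓝 0) := by
  have hlog_ratio : Tendsto (fun T => log (f T / T) / T) atTop (𝓝 0) :=
    ((continuousAt_log hc.ne').tendsto.comp hf).div_atTop tendsto_id
  have hlog_id : Tendsto (fun T => log T / T) atTop (𝓝 0) :=
    isLittleO_log_id_atTop.tendsto_div_nhds_zero
  have hsum := hlog_ratio.add hlog_id
  rw [add_zero] at hsum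
  refine hsum.congr' ?_
  filter_upwards [eventually_gt_atTop 0, hf.eventually (eventually_gt_nhds hc)] with T hT hfT
  have hfT : f T ≠ 0 := fun h => by rw [h, zero_div] at hfT; linarith
  rw [log_div hfT hT.ne', ← add_div, sub_add_cancel]

lemma tendsto_log_factorial_sub_div {n : ℝ → ℕ} {c : ℝ} (hc : 0 < c)
    (hn : Tendsto (fun T => (n T : ℝ) / T) atTop (𝓝 c)) :
    Tendsto (fun T => (log (n T)! - (n T * log (n T) - n T)) / T) atTop (𝓝 0) := by
  have hupper := ((tendsto_log_div_of_tendsto_div hc hn).div_const 2).add tendsto_inv_atTop_zero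
  rw [zero_div, zero_add] at hupper
  refine tendsto_of_tendsto_of_tendsto_of_le_of_le' tendsto_const_nhds hupper ?_ ?_
  all_goals filter_upwards [eventually_gt_atTop 0] with T hT
  · exact div_nonneg (by linarith [Real.mul_log_sub_le_log_factorial (n T)]) hT.le
  · calc _ ≤ (log (n T) / 2 + 1) / T := by
          gcongr
          linarith [Real.log_factorial_le (n T)]
      _ = _ := by ring

noncomputable def poissonRate (α c : ℝ) : ℝ := c * log (c / α) - c + α

lemma tendsto_log_poisson_pmf_div {α c : ℝ} (hα : 0 < α) (hc : 0 < c) {n : ℝ → ℕ}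
    (hn : Tendsto (fun T => (n T : ℝ) / T) atTop (𝓝 c)) :
    Tendsto (fun T => log (exp (-(α * T)) * (α * T) ^ n T / (n T)!) / T) atTop
      (𝓝 (-poissonRate α c)) := by
  have hlim := ((tendsto_const_nhds (x := -α)).add
    (hn.mul ((tendsto_const_nhds (x := log α)).sub
      ((continuousAt_log hc.ne').tendsto.comp hn)))).add hn |>.sub
    (tendsto_log_factorial_sub_div hc hn)
  rw [poissonRate, log_div hc.ne' hα.ne']
  convert hlim.congr' ?_ using 2
  · ring
  filter_upwards [eventually_gt_atTop 0, hn.eventually (eventually_gt_nhds hc)] with T hT hnT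
  have hnT : (n T : ℝ) ≠ 0 := fun h => by rw [h, zero_div] at hnT; linarith
  have hfac : ((n T)! : ℝ) ≠ 0 := by positivity
  simp only [Function.comp_apply]
  rw [log_div (by positivity) hfac, log_mul (exp_pos _).ne' (by positivity), log_exp, log_pow,
    log_mul hα.ne' hT.ne', log_div hnT hT.ne']
  field_simp
  ring

lemma tendsto_nat_floor_mul_add_one_div {a : ℝ} (ha : 0 ≤ a) :
    Tendsto (fun T : ℝ => ((⌊a * T⌋₊ + 1 : ℕ) : ℝ) / T) atTop (𝓝 a) := by
  have h := (tendsto_nat_floor_mul_div_atTop ha).add tendsto_inv_atTop_zero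
  rw [add_zero] at h
  refine h.congr fun T => ?_
  push_cast
  rw [add_div, one_div]

lemma rateI_eq_poissonRate {lam mu alpha x : ℝ} (hlam : 0 < lam) (hlm : 0 < lam + mu)
    (halpha : 0 < alpha) (hx : 0 ≤ x) :
    rateI lam mu alpha x = ((poissonRate alpha (max alpha x) - x * log (lam / (lam + mu)) : ℝ) :
      EReal) := by
  have hlog_inv : log (lam / (lam + mu)) = -log ((lam + mu) / lam) := by
    rw [← log_inv, inv_div]
  rw [rateI, if_neg hx.not_gt, hlog_inv, poissonRate]
  split_ifs with hxa
  · rw [max_eq_left hxa.le, div_self halpha.ne', log_one]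
    congr 1
    ring
  · have hx_pos : 0 < x := halpha.trans_le (not_lt.mp hxa)
    rw [max_eq_right (not_lt.mp hxa), mul_div_mul_comm, log_mul (by positivity) (by positivity)]
    congr 1
    ring

lemma EReal.coe_mul_log_le_mul_log {c b : ℝ} (hc : 0 ≤ c) (hb : 0 < b) {q : ENNReal}
    (hbq : ENNReal.ofReal b ≤ q) (hq : q ≠ ⊤) :
    ((c * log b : ℝ) : EReal) ≤ (c : EReal) * ENNReal.log q := by
  have hq0 : q ≠ 0 := ((ENNReal.ofReal_pos.mpr hb).trans_le hbq).ne'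
  rw [ENNReal.log_pos_real hq0 hq, ← EReal.coe_mul, EReal.coe_le_coe_iff]
  gcongr
  exact (ENNReal.ofReal_le_iff_le_toReal hq).mp hbq

open Fin.NatCast in
lemma Fin.natCast_funext_iff {k : ℕ} (g : ℕ → ℕ) (v : Fin (k + 1) → ℕ) :
    (fun i : Fin (k + 1) => g i) = v ↔ ∀ l ≤ k, g l = v l := by
  rw [funext_iff, Fin.forall_iff]
  refine forall_congr' fun l => ⟨fun h hl => ?_, fun h hl => ?_⟩ <;>
    have hcast : (l : Fin (k + 1)) = ⟨l, by omega⟩ := Fin.ext (Fin.val_cast_of_lt (by omega))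
  · rw [hcast]; exact h (by omega)
  · show g l = v ⟨l, hl⟩
    rw [← hcast]; exact h (by omega)

lemma transP_succ_ge {lam mu : ℝ} (hlam : 0 ≤ lam) (hmu : 0 ≤ mu) (i : ℕ) :
    lam / (lam + mu) ≤ transP lam mu i (i + 1) := by
  rcases eq_or_ne i 0 with rfl | hi
  · simpa [transP] using div_le_one_of_le₀ (le_add_of_nonneg_right hmu) (add_nonneg hlam hmu)
  · simp [transP, hi]

section CatastropheChain

variable {Ω : Type*} [MeasureSpace Ω] {lam mu : ℝ} {eta : Ω → ℕ → ℕ}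

open Fin.NatCast in
lemma IsCatastropheChain.measure_succ_eq_and_path_eq (hEta : IsCatastropheChain lam mu eta)
    (k j : ℕ) (v : Fin (k + 1) → ℕ) :
    ℙ {ω | eta ω (k + 1) = j ∧ (fun i : Fin (k + 1) => eta ω i) = v} =
      ENNReal.ofReal (transP lam mu (v (Fin.last k)) j) *
        ℙ {ω | (fun i : Fin (k + 1) => eta ω i) = v} := by
  simp only [Fin.natCast_funext_iff]
  rw [hEta.2.2 k (fun l => v l) j, Fin.natCast_eq_last]

-- Sum the Markov property over the countably many paths `(η 0, …, η k)` compatible with `A`.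
lemma IsCatastropheChain.ofReal_mul_measure_le_measure_inter_up
    (hEta : IsCatastropheChain lam mu eta) (hlam : 0 ≤ lam) (hmu : 0 ≤ mu) (k : ℕ) {A : Set Ω}
    (hA : ∀ ω ω', (∀ l ≤ k, eta ω l = eta ω' l) → ω ∈ A → ω' ∈ A) :
    ENNReal.ofReal (lam / (lam + mu)) * ℙ A ≤ ℙ (A ∩ {ω | eta ω (k + 1) = eta ω k + 1}) := by
  set path : Ω → Fin (k + 1) → ℕ := fun ω i => eta ω i
  have hpath : Measurable path := measurable_pi_lambda _ fun i => hEta.1 i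
  have hA_eq : A = path ⁻¹' (path '' A) := by
    refine (Set.subset_preimage_image path A).antisymm ?_
    rintro ω ⟨ω', hω', hpathω⟩
    exact hA ω' ω (fun l hl => congrFun hpathω ⟨l, by omega⟩) hω'
  set E : path '' A → Set Ω := fun v => {ω | eta ω (k + 1) = v.1 (Fin.last k) + 1 ∧ path ω = v}
  have hE_meas : ∀ v, MeasurableSet (E v) := fun v =>
    (measurableSet_eq_fun (hEta.1 _) measurable_const).inter (hpath (measurableSet_singleton _))
  have hE_disj : Pairwise (Function.onFun Disjoint E) := fun v w hvw =>
    Set.disjoint_left.mpr fun ω hv hw => hvw (Subtype.ext (hv.2.symm.trans hw.2))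
  have hE_sub : (⋃ v, E v) ⊆ A ∩ {ω | eta ω (k + 1) = eta ω k + 1} := by
    rintro ω ⟨_, ⟨v, rfl⟩, hω⟩
    refine ⟨hA_eq ▸ (hω.2 ▸ v.2 : path ω ∈ path '' A), ?_⟩
    exact hω.1.trans (congrArg (· + 1) (congrFun hω.2 (Fin.last k)).symm)
  calc ENNReal.ofReal (lam / (lam + mu)) * ℙ A
      = ∑' v : path '' A, ENNReal.ofReal (lam / (lam + mu)) * ℙ (path ⁻¹' {v.1}) := by
        rw [ENNReal.tsum_mul_left, tsum_measure_preimage_singleton (Set.to_countable _)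
          fun _ _ => hpath (measurableSet_singleton _), ← hA_eq]
    _ ≤ ∑' v, ℙ (E v) := by
        refine ENNReal.tsum_le_tsum fun v => ?_
        rw [show ℙ (E v) = _ from hEta.measure_succ_eq_and_path_eq k _ v]
        exact mul_le_mul_left (ENNReal.ofReal_le_ofReal (transP_succ_ge hlam hmu _)) _
    _ = ℙ (⋃ v, E v) := (measure_iUnion hE_disj hE_meas).symm
    _ ≤ _ := measure_mono hE_sub

lemma IsCatastropheChain.ofReal_pow_le_measure_up_run [IsProbabilityMeasure (ℙ : Measure Ω)]
    (hEta : IsCatastropheChain lam mu eta) (hlam : 0 ≤ lam) (hmu : 0 ≤ mu) (K m : ℕ) :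
    ENNReal.ofReal ((lam / (lam + mu)) ^ m) ≤ ℙ {ω | ∀ j ≤ m, eta ω (K + j) = eta ω K + j} := by
  induction m with
  | zero => simp
  | succ m ih =>
    have hrun : {ω | ∀ j ≤ m + 1, eta ω (K + j) = eta ω K + j} =
        {ω | ∀ j ≤ m, eta ω (K + j) = eta ω K + j} ∩
          {ω | eta ω (K + m + 1) = eta ω (K + m) + 1} := by
      ext ω
      refine ⟨fun h => ⟨fun j hj => h j (by omega), ?_⟩, fun ⟨h, hstep⟩ j hj => ?_⟩
      · have hsucc := h (m + 1) le_rfl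
        rw [← add_assoc] at hsucc
        simp only [Set.mem_ofPred_eq, hsucc, h m (by omega)]
        rfl
      · rcases Nat.lt_or_eq_of_le hj with hj | rfl
        · exact h j (by omega)
        · rw [← add_assoc, hstep, h m le_rfl]; rfl
    rw [hrun, pow_succ', ENNReal.ofReal_mul (div_nonneg hlam (add_nonneg hlam hmu))]
    refine (mul_le_mul_right ih _).trans
      (hEta.ofReal_mul_measure_le_measure_inter_up hlam hmu (K + m) ?_)
    intro ω ω' hωω' hω j hj
    rw [← hωω' _ (by omega), ← hωω' K (by omega)]
    exact hω j hj

lemma IsCatastropheChain.ofReal_poisson_mul_pow_le_measure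
    [IsProbabilityMeasure (ℙ : Measure Ω)] (hEta : IsCatastropheChain lam mu eta)
    (hlam : 0 ≤ lam) (hmu : 0 ≤ mu) {r : ℝ} {N : Ω → ℕ} (hN : IsPoissonRV r N)
    (hInd : IndepFun N eta ℙ) {n m : ℕ} (hmn : m ≤ n) {y : ℝ} (hy : y < m) :
    ENNReal.ofReal (Real.exp (-r) * r ^ n / n ! * (lam / (lam + mu)) ^ m) ≤
      ℙ {ω | y < eta ω (N ω)} := by
  set B : Set (ℕ → ℕ) := {g | ∀ j ≤ m, g (n - m + j) = g (n - m) + j}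
  have hB : MeasurableSet B := by
    simp only [B, Set.ofPred_forall]
    exact MeasurableSet.iInter fun j => MeasurableSet.iInter fun _ =>
      measurableSet_eq_fun (measurable_pi_apply _) ((measurable_pi_apply _).add_const _)
  have hsub : N ⁻¹' {n} ∩ eta ⁻¹' B ⊆ {ω | y < eta ω (N ω)} := by
    rintro ω ⟨hNω, hrun⟩
    have hreach : eta ω n = eta ω (n - m) + m := by
      rw [← hrun m le_rfl, Nat.sub_add_cancel hmn]
    simp only [Set.mem_ofPred_eq, Set.mem_singleton_iff.mp hNω, hreach]
    push_cast
    linarith [(eta ω (n - m)).cast_nonneg (α := ℝ)]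
  calc ENNReal.ofReal (Real.exp (-r) * r ^ n / n ! * (lam / (lam + mu)) ^ m)
      = ℙ (N ⁻¹' {n}) * ENNReal.ofReal ((lam / (lam + mu)) ^ m) := by
        rw [ENNReal.ofReal_mul' (by positivity), ← hN.2 n]
        rfl
    _ ≤ ℙ (N ⁻¹' {n}) * ℙ (eta ⁻¹' B) :=
        mul_le_mul_right (hEta.ofReal_pow_le_measure_up_run hlam hmu (n - m) m) _
    _ = ℙ (N ⁻¹' {n} ∩ eta ⁻¹' B) :=
        (hInd.measure_inter_preimage_eq_mul _ _ (measurableSet_singleton n) hB).symm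
    _ ≤ _ := measure_mono hsub

end CatastropheChain

theorem ldp_lower_bound_tail
    {Ω : Type*} [MeasureSpace Ω] [IsProbabilityMeasure (ℙ : Measure Ω)]
    (lam mu alpha : ℝ) (hlam : 0 < lam) (hmu : 0 < mu) (halpha : 0 < alpha)
    (eta : Ω → ℕ → ℕ) (hEta : IsCatastropheChain lam mu eta)
    (N : ℝ → Ω → ℕ)
    (hN : ∀ T > (0 : ℝ), IsPoissonRV (alpha * T) (N T))
    (hInd : ∀ T > (0 : ℝ), IndepFun (N T) eta ℙ)
    (x : ℝ) (hx : 0 < x) :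
    - rateI lam mu alpha x ≤
      Filter.liminf
        (fun T : ℝ => ((1 / T : ℝ) : EReal) *
          ENNReal.log (ℙ {ω | x < (eta ω (N T ω) : ℝ) / T})) Filter.atTop := by
  set p := lam / (lam + mu)
  have hp : 0 < p := by positivity
  set M := max alpha x
  set n : ℝ → ℕ := fun T => ⌊M * T⌋₊ + 1
  set m : ℝ → ℕ := fun T => ⌊x * T⌋₊ + 1
  set b : ℝ → ℝ := fun T => Real.exp (-(alpha * T)) * (alpha * T) ^ n T / (n T)! * p ^ m T
  have hlim : Tendsto (fun T => 1 / T * log (b T)) atTop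
      (𝓝 (-poissonRate alpha M + x * log p)) := by
    have hpoisson := tendsto_log_poisson_pmf_div halpha (halpha.trans_le (le_max_left _ x))
      (tendsto_nat_floor_mul_add_one_div (halpha.le.trans (le_max_left _ x)))
    refine (hpoisson.add ((tendsto_nat_floor_mul_add_one_div hx.le).mul_const (log p))).congr' ?_
    filter_upwards [eventually_gt_atTop 0] with T hT
    rw [log_mul (by positivity) (by positivity), log_pow]
    ring
  have hbound : ∀ᶠ T in atTop, ((1 / T * log (b T) : ℝ) : EReal) ≤
      ((1 / T : ℝ) : EReal) * ENNReal.log (ℙ {ω | x < (eta ω (N T ω) : ℝ) / T}) := by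
    filter_upwards [eventually_gt_atTop 0] with T hT
    have hevent : {ω | x < (eta ω (N T ω) : ℝ) / T} = {ω | x * T < eta ω (N T ω)} :=
      Set.ext fun ω => lt_div_iff₀ hT
    have hmn : m T ≤ n T := Nat.succ_le_succ (Nat.floor_mono (by gcongr; exact le_max_right _ _))
    refine EReal.coe_mul_log_le_mul_log (by positivity) (by positivity) ?_ (measure_ne_top _ _)
    rw [hevent]
    exact hEta.ofReal_poisson_mul_pow_le_measure hlam.le hmu.le (hN T hT) (hInd T hT) hmn
      (by simpa [m] using Nat.lt_floor_add_one (x * T))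
  rw [rateI_eq_poissonRate hlam (by positivity) halpha hx.le, ← EReal.coe_neg, neg_sub,
    sub_eq_neg_add]
  calc _ = liminf (fun T => ((1 / T * log (b T) : ℝ) : EReal)) atTop :=
        (EReal.tendsto_coe.mpr hlim).liminf_eq.symm
    _ ≤ _ := liminf_le_liminf hbound
end

section
/- The family ξ_T(1) is exponentially tight with normalizing function ψ(T) = T: for every c > 0 there exists a compact set K_c ⊆ ℝ such that limsup_{T→∞} (1/T) ln P(ξ_T(1) ∉ K_c) < −c. -/
open MeasureTheory ProbabilityTheory Filter

/-!
The chain climbs by at most one per step, so `η(N_T) ≤ N_T` almost surely and leaving `[0, M]`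
forces `N_T ≥ MT`. Since `n! k! ≤ (n + k)!`, a Poisson variable of mean `m` has
`P(N ≥ n) ≤ m^n / n!`, and `n^n / n! ≤ e^n` turns this into `P(N ≥ n) ≤ e^{-n}` once
`n ≥ e² m`. So for `M ≥ e² α` the escape probability is at most `e^{-MT}`, and `M > c` finishes.
-/

open scoped ENNReal Nat

lemma transP_eq_zero_of_succ_lt {lam mu : ℝ} {i j : ℕ} (h : i + 1 < j) :
    transP lam mu i j = 0 := by
  unfold transP
  split_ifs <;> first | rfl | omega

namespace IsCatastropheChain

variable {Ω : Type*} [MeasureSpace Ω] {lam mu : ℝ} {eta : Ω → ℕ → ℕ}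

lemma ae_initial_eq_zero [IsProbabilityMeasure (ℙ : Measure Ω)]
    (hEta : IsCatastropheChain lam mu eta) : ∀ᵐ ω, eta ω 0 = 0 := by
  have hmeas : MeasurableSet {ω | eta ω 0 = 0} := (hEta.1 0) (measurableSet_singleton 0)
  rw [ae_iff_measure_eq hmeas.nullMeasurableSet, hEta.2.1, measure_univ]

lemma ae_le_succ (hEta : IsCatastropheChain lam mu eta) (k : ℕ) :
    ∀ᵐ ω, eta ω (k + 1) ≤ eta ω k + 1 := by
  -- a path of length `k` is encoded by its values on `Fin (k + 1)`, a countable index set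
  let path : (Fin (k + 1) → ℕ) → ℕ → ℕ := fun v l => if h : l < k + 1 then v ⟨l, h⟩ else 0
  have hcover : {ω | eta ω k + 1 < eta ω (k + 1)} ⊆
      ⋃ (v : Fin (k + 1) → ℕ) (j : ℕ) (_ : path v k + 1 < j),
        {ω | eta ω (k + 1) = j ∧ ∀ l ≤ k, eta ω l = path v l} := by
    intro ω hω
    simp only [Set.mem_iUnion, Set.mem_ofPred_eq]
    refine ⟨fun l => eta ω l, eta ω (k + 1), ?_, rfl, fun l hl => ?_⟩
    · simpa [path] using hω
    · simp only [path, dif_pos (show l < k + 1 by omega)]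
  rw [ae_iff]
  push Not
  refine measure_mono_null hcover (measure_iUnion_null fun v => measure_iUnion_null fun j =>
    measure_iUnion_null fun hj => ?_)
  rw [hEta.2.2, transP_eq_zero_of_succ_lt hj, ENNReal.ofReal_zero, zero_mul]

lemma ae_le_self [IsProbabilityMeasure (ℙ : Measure Ω)]
    (hEta : IsCatastropheChain lam mu eta) : ∀ᵐ ω, ∀ k, eta ω k ≤ k := by
  filter_upwards [hEta.ae_initial_eq_zero, ae_all_iff.2 hEta.ae_le_succ] with ω h0 hsucc k
  induction k with
  | zero => omega
  | succ k ih => have := hsucc k; omega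

end IsCatastropheChain

lemma pow_div_factorial_le_exp_neg {m : ℝ} {n : ℕ} (hm : 0 ≤ m) (h : Real.exp 2 * m ≤ n) :
    m ^ n / n ! ≤ Real.exp (-n) := by
  have hm' : m ≤ Real.exp (-2) * n := by
    rw [Real.exp_neg, ← div_eq_inv_mul, le_div_iff₀' (Real.exp_pos 2)]
    exact h
  calc m ^ n / n ! ≤ (Real.exp (-2) * n) ^ n / n ! := by gcongr
    _ = Real.exp (-2) ^ n * ((n : ℝ) ^ n / n !) := by rw [mul_pow, mul_div_assoc]
    _ ≤ Real.exp (-2) ^ n * Real.exp n := by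
        gcongr
        exact Real.pow_div_factorial_le_exp _ n.cast_nonneg n
    _ = Real.exp (-n) := by rw [← Real.exp_nat_mul, ← Real.exp_add]; ring_nf

namespace IsPoissonRV

variable {Ω : Type*} [MeasureSpace Ω] [IsProbabilityMeasure (ℙ : Measure Ω)] {m : ℝ}
  {N : Ω → ℕ}

lemma measure_ge_le (hm : 0 ≤ m) (hN : IsPoissonRV m N) (n : ℕ) :
    ℙ {ω | n ≤ N ω} ≤ ENNReal.ofReal (m ^ n / n !) := by
  have htotal : ∑' k : ℕ, ℙ {ω | N ω = k} = 1 := by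
    have := tsum_measure_preimage_singleton (μ := ℙ) Set.countable_univ
      (fun y _ => hN.1 (measurableSet_singleton y))
    rwa [Set.preimage_univ, measure_univ, tsum_univ (f := fun k => ℙ (N ⁻¹' {k}))] at this
  have hcover : {ω | n ≤ N ω} ⊆ ⋃ k : ℕ, {ω | N ω = n + k} := fun ω hω =>
    Set.mem_iUnion.2 ⟨N ω - n, by simp only [Set.mem_ofPred_eq] at hω ⊢; omega⟩
  have hshift (k : ℕ) :
      ℙ {ω | N ω = n + k} ≤ ENNReal.ofReal (m ^ n / n !) * ℙ {ω | N ω = k} := by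
    rw [hN.2, hN.2, ← ENNReal.ofReal_mul (by positivity)]
    refine ENNReal.ofReal_le_ofReal ?_
    have hfact : (n ! * k ! : ℝ) ≤ (n + k)! := by
      exact_mod_cast Nat.le_of_dvd (Nat.factorial_pos _)
        (Nat.factorial_mul_factorial_dvd_factorial_add n k)
    calc Real.exp (-m) * m ^ (n + k) / (n + k)!
        ≤ Real.exp (-m) * m ^ (n + k) / (n ! * k !) := by gcongr
      _ = m ^ n / n ! * (Real.exp (-m) * m ^ k / k !) := by rw [pow_add]; field_simp
  calc ℙ {ω | n ≤ N ω} ≤ ∑' k : ℕ, ℙ {ω | N ω = n + k} :=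
        (measure_mono hcover).trans (measure_iUnion_le _)
    _ ≤ ∑' k : ℕ, ENNReal.ofReal (m ^ n / n !) * ℙ {ω | N ω = k} := ENNReal.tsum_le_tsum hshift
    _ = ENNReal.ofReal (m ^ n / n !) := by rw [ENNReal.tsum_mul_left, htotal, mul_one]

lemma measure_ge_le_exp_neg (hm : 0 ≤ m) (hN : IsPoissonRV m N) {n : ℕ}
    (hn : Real.exp 2 * m ≤ n) : ℙ {ω | n ≤ N ω} ≤ ENNReal.ofReal (Real.exp (-n)) :=
  (hN.measure_ge_le hm n).trans (ENNReal.ofReal_le_ofReal (pow_div_factorial_le_exp_neg hm hn))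

end IsPoissonRV

lemma limsup_inv_mul_log_le_of_le_exp {p : ℝ → ℝ≥0∞} {a : ℝ}
    (h : ∀ᶠ T in atTop, p T ≤ ENNReal.ofReal (Real.exp (-(a * T)))) :
    limsup (fun T : ℝ => ((1 / T : ℝ) : EReal) * ENNReal.log (p T)) atTop ≤ ((-a : ℝ) : EReal) := by
  refine limsup_le_of_le (by isBoundedDefault) ?_
  filter_upwards [h, eventually_gt_atTop 0] with T hpT hT
  have hlog : ENNReal.log (p T) ≤ ((-(a * T) : ℝ) : EReal) := by
    simpa [ENNReal.log_ofReal_of_pos (Real.exp_pos _)] using ENNReal.log_monotone hpT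
  calc ((1 / T : ℝ) : EReal) * ENNReal.log (p T)
        ≤ ((1 / T : ℝ) : EReal) * ((-(a * T) : ℝ) : EReal) :=
        mul_le_mul_of_nonneg_left hlog (by exact_mod_cast (one_div_pos.2 hT).le)
    _ = ((-a : ℝ) : EReal) := by rw [← EReal.coe_mul]; congr 1; field_simp

lemma measure_div_notMem_Icc_le_exp {Ω : Type*} [MeasureSpace Ω]
    [IsProbabilityMeasure (ℙ : Measure Ω)] {lam mu alpha T M : ℝ} {eta : Ω → ℕ → ℕ}
    {N : Ω → ℕ} (hEta : IsCatastropheChain lam mu eta) (hN : IsPoissonRV (alpha * T) N)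
    (halpha : 0 ≤ alpha) (hT : 0 < T) (hM : Real.exp 2 * alpha ≤ M) :
    ℙ {ω | (eta ω (N ω) : ℝ) / T ∉ Set.Icc 0 M} ≤ ENNReal.ofReal (Real.exp (-(M * T))) := by
  have hescape : {ω | (eta ω (N ω) : ℝ) / T ∉ Set.Icc 0 M} ≤ᵐ[ℙ] {ω | ⌈M * T⌉₊ ≤ N ω} := by
    filter_upwards [hEta.ae_le_self] with ω hle hout
    have hgt : M * T < eta ω (N ω) := by
      rw [← lt_div_iff₀ hT]
      simp only [Set.mem_Icc, not_and, not_le] at hout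
      exact hout (by positivity)
    exact Nat.ceil_le.2 (hgt.le.trans (by exact_mod_cast hle (N ω)))
  calc ℙ {ω | (eta ω (N ω) : ℝ) / T ∉ Set.Icc 0 M} ≤ ℙ {ω | ⌈M * T⌉₊ ≤ N ω} :=
        measure_mono_ae hescape
    _ ≤ ENNReal.ofReal (Real.exp (-⌈M * T⌉₊)) := by
        refine hN.measure_ge_le_exp_neg (by positivity) ?_
        calc Real.exp 2 * (alpha * T) ≤ M * T := by rw [← mul_assoc]; gcongr
          _ ≤ ⌈M * T⌉₊ := Nat.le_ceil _
    _ ≤ ENNReal.ofReal (Real.exp (-(M * T))) := by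
        gcongr
        exact Nat.le_ceil _

theorem exponential_tightness_population_catastrophes_general
    {Ω : Type*} [MeasureSpace Ω] [IsProbabilityMeasure (ℙ : Measure Ω)]
    (lam mu alpha : ℝ) (halpha : 0 < alpha)
    (eta : Ω → ℕ → ℕ) (hEta : IsCatastropheChain lam mu eta)
    (N : ℝ → Ω → ℕ)
    (hN : ∀ T > (0 : ℝ), IsPoissonRV (alpha * T) (N T)) :
    ∀ c : ℝ, 0 < c → ∃ K : Set ℝ, IsCompact K ∧
      Filter.limsup
          (fun T : ℝ => ((1 / T : ℝ) : EReal) *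
            ENNReal.log (ℙ {ω | ((eta ω (N T ω) : ℝ) / T) ∉ K})) Filter.atTop
        < ((-c : ℝ) : EReal) := by
  intro c _
  set M := max (Real.exp 2 * alpha) (c + 1)
  have hMc : c + 1 ≤ M := le_max_right _ _
  refine ⟨Set.Icc 0 M, isCompact_Icc, ?_⟩
  have htail : ∀ᶠ T in atTop,
      ℙ {ω | (eta ω (N T ω) : ℝ) / T ∉ Set.Icc 0 M} ≤ ENNReal.ofReal (Real.exp (-(M * T))) := by
    filter_upwards [eventually_gt_atTop 0] with T hT
    exact measure_div_notMem_Icc_le_exp hEta (hN T hT) halpha.le hT (le_max_left _ _)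
  calc _ ≤ ((-M : ℝ) : EReal) := limsup_inv_mul_log_le_of_le_exp htail
    _ < ((-c : ℝ) : EReal) := EReal.coe_lt_coe_iff.2 (by linarith)

theorem exponential_tightness_population_catastrophes
    {Ω : Type*} [MeasureSpace Ω] [IsProbabilityMeasure (ℙ : Measure Ω)]
    (lam mu alpha : ℝ) (hlam : 0 < lam) (hmu : 0 < mu) (halpha : 0 < alpha)
    (eta : Ω → ℕ → ℕ) (hEta : IsCatastropheChain lam mu eta)
    (N : ℝ → Ω → ℕ)
    (hN : ∀ T > (0 : ℝ), IsPoissonRV (alpha * T) (N T))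
    (hInd : ∀ T > (0 : ℝ), IndepFun (N T) eta ℙ) :
    ∀ c : ℝ, 0 < c → ∃ K : Set ℝ, IsCompact K ∧
      Filter.limsup
          (fun T : ℝ => ((1 / T : ℝ) : EReal) *
            ENNReal.log (ℙ {ω | ((eta ω (N T ω) : ℝ) / T) ∉ K})) Filter.atTop
        < ((-c : ℝ) : EReal) :=
  exponential_tightness_population_catastrophes_general lam mu alpha halpha eta hEta N hN
end

section
/- For every t ∈ (0, 1] and every ε > 0, lim_{T→∞} P(η(N_{tT}) > εT) = 0, where N_{tT} is a Poisson random variable with mean αtT independent of the chain η (a fixed-time law-of-large-numbers statement: the scaled process η(N_{tT})/T converges to 0 in probability). -/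
open MeasureTheory ProbabilityTheory Filter

/-!
From a state `i ≥ 1` the chain grows by one with probability `lam / (lam + mu)` and otherwise
jumps uniformly below `i`, to mean `(i - 1) / 2`; so its next mean is at most `c * i + 1` with
`c = (lam + mu / 2) / (lam + mu) < 1`. Iterating from `eta 0 = 0` bounds `E[eta k]` by the fixed
point `2 (lam + mu) / mu`, uniformly in `k`. Independence of `N T` and the chain transfers this
bound to `E[eta (N T)]`, and Markov's inequality gives a probability at most
`2 (lam + mu) / (mu * ε * T) → 0`.
-/

open scoped ENNReal

section IndexedIntegrals

variable {Ω ι β : Type*} [MeasurableSpace Ω] [MeasurableSpace ι] [MeasurableSpace β]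
  [Countable ι] [MeasurableSingletonClass ι] {μ : Measure Ω}

lemma lintegral_comp_eq_tsum {X : Ω → ι} (hX : Measurable X) (f : ι → ℝ≥0∞) :
    ∫⁻ ω, f (X ω) ∂μ = ∑' i, f i * μ (X ⁻¹' {i}) := by
  rw [← lintegral_map (measurable_of_countable f) hX, lintegral_countable']
  simp_rw [Measure.map_apply hX (measurableSet_singleton _)]

lemma measurable_uncurry_apply_of_countable :
    Measurable fun p : (ι → β) × ι => p.1 p.2 :=
  measurable_from_prod_countable_left fun i => measurable_pi_apply i

lemma measurable_apply_index {X : Ω → ι} {Y : Ω → ι → β} (hX : Measurable X)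
    (hY : Measurable Y) : Measurable fun ω => Y ω (X ω) :=
  measurable_uncurry_apply_of_countable.comp (hY.prodMk hX)

lemma lintegral_apply_index_of_indepFun [IsFiniteMeasure μ] {X : Ω → ι} {Y : Ω → ι → β}
    (hX : Measurable X) (hY : Measurable Y) (hXY : IndepFun Y X μ) {f : β → ℝ≥0∞}
    (hf : Measurable f) :
    ∫⁻ ω, f (Y ω (X ω)) ∂μ = ∫⁻ i, ∫⁻ ω, f (Y ω i) ∂μ ∂(μ.map X) := by
  have hg : Measurable fun p : (ι → β) × ι => f (p.1 p.2) :=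
    hf.comp measurable_uncurry_apply_of_countable
  rw [← lintegral_map hg (hY.prodMk hX),
    (indepFun_iff_map_prod_eq_prod_map_map hY.aemeasurable hX.aemeasurable).1 hXY,
    lintegral_prod_symm _ hg.aemeasurable]
  refine lintegral_congr fun i => ?_
  exact lintegral_map (hf.comp (measurable_pi_apply i)) hY

end IndexedIntegrals

lemma sum_range_cast_id (n : ℕ) : ∑ j ∈ Finset.range n, (j : ℝ) = n * (n - 1) / 2 := by
  induction n with
  | zero => simp
  | succ n ih => rw [Finset.sum_range_succ, ih]; push_cast; ring

section Transition

variable {lam mu : ℝ}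

lemma transP_nonneg (hlam : 0 ≤ lam) (hmu : 0 ≤ mu) (i j : ℕ) : 0 ≤ transP lam mu i j := by
  unfold transP
  split_ifs <;> positivity

lemma transP_eq_zero_of_add_two_le {i j : ℕ} (hij : i + 2 ≤ j) : transP lam mu i j = 0 := by
  unfold transP
  split_ifs <;> first | rfl | omega

lemma sum_range_mul_transP {i : ℕ} (hi : i ≠ 0) :
    ∑ j ∈ Finset.range (i + 2), (j : ℝ) * transP lam mu i j
      = i * (i - 1) / 2 * (mu / (i * (lam + mu))) + (i + 1) * (lam / (lam + mu)) := by
  have hlow : ∀ j ∈ Finset.range i, (j : ℝ) * transP lam mu i j = j * (mu / (i * (lam + mu))) :=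
    fun j hj => by
      have hji := Finset.mem_range.mp hj
      simp [transP, hi, hji, show j ≠ i + 1 by omega]
  rw [Finset.sum_range_succ, Finset.sum_range_succ, Finset.sum_congr rfl hlow, ← Finset.sum_mul,
    sum_range_cast_id]
  simp [transP, hi]

lemma sum_range_mul_transP_le (hlam : 0 < lam) (hmu : 0 < mu) (i : ℕ) :
    ∑ j ∈ Finset.range (i + 2), (j : ℝ) * transP lam mu i j
      ≤ (lam + mu / 2) / (lam + mu) * i + 1 := by
  rcases eq_or_ne i 0 with rfl | hi
  · simp [transP]
  · rw [sum_range_mul_transP hi]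
    have hi' : (i : ℝ) ≠ 0 := Nat.cast_ne_zero.mpr hi
    have hgap : (lam + mu / 2) / (lam + mu) * i + 1
        - (i * (i - 1) / 2 * (mu / (i * (lam + mu))) + (i + 1) * (lam / (lam + mu)))
        = 3 * mu / (2 * (lam + mu)) := by
      field_simp
      ring
    have : 0 < 3 * mu / (2 * (lam + mu)) := by positivity
    linarith

lemma tsum_mul_transP_le (hlam : 0 < lam) (hmu : 0 < mu) (i : ℕ) :
    ∑' j : ℕ, (j : ℝ≥0∞) * ENNReal.ofReal (transP lam mu i j)
      ≤ ENNReal.ofReal ((lam + mu / 2) / (lam + mu)) * i + 1 := by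
  have hnonneg j := transP_nonneg hlam.le hmu.le i j
  rw [tsum_eq_sum (s := Finset.range (i + 2)) fun j hj => by
    rw [transP_eq_zero_of_add_two_le (by simpa using hj), ENNReal.ofReal_zero, mul_zero]]
  calc ∑ j ∈ Finset.range (i + 2), (j : ℝ≥0∞) * ENNReal.ofReal (transP lam mu i j)
      = ENNReal.ofReal (∑ j ∈ Finset.range (i + 2), (j : ℝ) * transP lam mu i j) := by
        rw [ENNReal.ofReal_sum_of_nonneg fun j _ => mul_nonneg (Nat.cast_nonneg _) (hnonneg j)]
        simp_rw [ENNReal.ofReal_mul (Nat.cast_nonneg _), ENNReal.ofReal_natCast]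
    _ ≤ ENNReal.ofReal ((lam + mu / 2) / (lam + mu) * i + 1) :=
        ENNReal.ofReal_le_ofReal (sum_range_mul_transP_le hlam hmu i)
    _ = ENNReal.ofReal ((lam + mu / 2) / (lam + mu)) * i + 1 := by
        rw [ENNReal.ofReal_add (by positivity) zero_le_one, ENNReal.ofReal_mul (by positivity),
          ENNReal.ofReal_natCast, ENNReal.ofReal_one]

end Transition

lemma preimage_history_singleton {Ω : Type*} (eta : Ω → ℕ → ℕ) (k : ℕ) (v : Fin (k + 1) → ℕ) :
    (fun ω (l : Fin (k + 1)) => eta ω l) ⁻¹' {v}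
      = {ω | ∀ l ≤ k, eta ω l = if h : l < k + 1 then v ⟨l, h⟩ else 0} := by
  ext ω
  simp +contextual [funext_iff, Fin.forall_iff]

namespace IsCatastropheChain

variable {Ω : Type*} [MeasureSpace Ω] {lam mu : ℝ} {eta : Ω → ℕ → ℕ}

/-- The Markov property, summed over all histories ending at `i`. -/
lemma measure_succ_eq_and_eq (hEta : IsCatastropheChain lam mu eta) (k i j : ℕ) :
    ℙ {ω | eta ω (k + 1) = j ∧ eta ω k = i}
      = ENNReal.ofReal (transP lam mu i j) * ℙ {ω | eta ω k = i} := by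
  set H := fun ω (l : Fin (k + 1)) => eta ω l
  set B : Set (Fin (k + 1) → ℕ) := {v | v (Fin.last k) = i}
  have hB : {ω | eta ω k = i} = H ⁻¹' B := rfl
  have hfib : ∀ v ∈ B, MeasurableSet (H ⁻¹' {v}) := fun v _ =>
    measurable_pi_lambda H (fun l => hEta.1 l) (measurableSet_singleton v)
  have hS : MeasurableSet {ω | eta ω (k + 1) = j} := hEta.1 (k + 1) (measurableSet_singleton j)
  calc ℙ {ω | eta ω (k + 1) = j ∧ eta ω k = i}
      = ((ℙ : Measure Ω).restrict {ω | eta ω (k + 1) = j}) (H ⁻¹' B) := by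
        rw [Measure.restrict_apply' hS, Set.inter_comm]; rfl
    _ = ∑' v : B, ℙ ({ω | eta ω (k + 1) = j} ∩ H ⁻¹' {v.1}) := by
        rw [← tsum_measure_preimage_singleton B.to_countable hfib]
        simp_rw [Measure.restrict_apply' hS, Set.inter_comm]
    _ = ∑' v : B, ENNReal.ofReal (transP lam mu i j) * ℙ (H ⁻¹' {v.1}) := by
        refine tsum_congr fun ⟨v, hv⟩ => ?_
        have hlast : (if h : k < k + 1 then v ⟨k, h⟩ else 0) = i := by
          rw [dif_pos k.lt_succ_self]; exact hv
        rw [preimage_history_singleton, ← hlast]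
        exact hEta.2.2 k _ j
    _ = ENNReal.ofReal (transP lam mu i j) * ℙ {ω | eta ω k = i} := by
        rw [ENNReal.tsum_mul_left, tsum_measure_preimage_singleton B.to_countable hfib, hB]

variable [IsProbabilityMeasure (ℙ : Measure Ω)]

lemma lintegral_succ_le (hEta : IsCatastropheChain lam mu eta) (hlam : 0 < lam) (hmu : 0 < mu)
    (k : ℕ) :
    ∫⁻ ω, (eta ω (k + 1) : ℝ≥0∞) ∂ℙ
      ≤ ENNReal.ofReal ((lam + mu / 2) / (lam + mu)) * ∫⁻ ω, (eta ω k : ℝ≥0∞) ∂ℙ + 1 := by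
  set c := ENNReal.ofReal ((lam + mu / 2) / (lam + mu))
  have hpair : Measurable fun ω => (eta ω k, eta ω (k + 1)) := (hEta.1 k).prodMk (hEta.1 (k + 1))
  calc ∫⁻ ω, (eta ω (k + 1) : ℝ≥0∞) ∂ℙ
      = ∑' i : ℕ, ∑' j : ℕ, (j : ℝ≥0∞) * ℙ {ω | eta ω (k + 1) = j ∧ eta ω k = i} := by
        rw [lintegral_comp_eq_tsum hpair (fun p => (p.2 : ℝ≥0∞)), ENNReal.tsum_prod']
        refine tsum_congr fun i => tsum_congr fun j => ?_
        congr 2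
        ext ω
        simp [and_comm]
    _ = ∑' i : ℕ, (∑' j : ℕ, (j : ℝ≥0∞) * ENNReal.ofReal (transP lam mu i j))
          * ℙ {ω | eta ω k = i} := by
        simp_rw [hEta.measure_succ_eq_and_eq, ← mul_assoc, ENNReal.tsum_mul_right]
    _ ≤ ∑' i : ℕ, (c * i + 1) * ℙ {ω | eta ω k = i} :=
        ENNReal.tsum_le_tsum fun i => by gcongr; exact tsum_mul_transP_le hlam hmu i
    _ = ∫⁻ ω, (c * eta ω k + 1) ∂ℙ := (lintegral_comp_eq_tsum (hEta.1 k) _).symm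
    _ = c * ∫⁻ ω, (eta ω k : ℝ≥0∞) ∂ℙ + 1 := by
        rw [lintegral_add_right _ measurable_const, lintegral_const_mul' _ _ ENNReal.ofReal_ne_top,
          lintegral_const, measure_univ, one_mul]

lemma lintegral_zero_eq_zero (hEta : IsCatastropheChain lam mu eta) :
    ∫⁻ ω, (eta ω 0 : ℝ≥0∞) ∂ℙ = 0 := by
  have hstart : ∀ᵐ ω ∂(ℙ : Measure Ω), eta ω 0 = 0 :=
    (ae_iff_measure_eq (hEta.1 0 (measurableSet_singleton 0)).nullMeasurableSet).2
      (by rw [measure_univ]; exact hEta.2.1)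
  rw [← lintegral_zero (μ := (ℙ : Measure Ω))]
  exact lintegral_congr_ae (hstart.mono fun ω hω => by simp [hω])

/-- `2 (lam + mu) / mu` is the fixed point of `x ↦ (lam + mu / 2) / (lam + mu) * x + 1`. -/
lemma lintegral_le (hEta : IsCatastropheChain lam mu eta) (hlam : 0 < lam) (hmu : 0 < mu)
    (k : ℕ) : ∫⁻ ω, (eta ω k : ℝ≥0∞) ∂ℙ ≤ ENNReal.ofReal (2 * (lam + mu) / mu) := by
  induction k with
  | zero => simp [hEta.lintegral_zero_eq_zero]
  | succ k ih =>
    calc ∫⁻ ω, (eta ω (k + 1) : ℝ≥0∞) ∂ℙ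
        ≤ ENNReal.ofReal ((lam + mu / 2) / (lam + mu)) * ∫⁻ ω, (eta ω k : ℝ≥0∞) ∂ℙ + 1 :=
          hEta.lintegral_succ_le hlam hmu k
      _ ≤ ENNReal.ofReal ((lam + mu / 2) / (lam + mu)) * ENNReal.ofReal (2 * (lam + mu) / mu)
            + 1 := by gcongr
      _ = ENNReal.ofReal (2 * (lam + mu) / mu) := by
          rw [← ENNReal.ofReal_mul (by positivity), ← ENNReal.ofReal_one,
            ← ENNReal.ofReal_add (by positivity) zero_le_one]
          congr 1
          field_simp
          ring

end IsCatastropheChain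

theorem lln_population_catastrophes_general
    {Ω : Type*} [MeasureSpace Ω] [IsProbabilityMeasure (ℙ : Measure Ω)]
    (lam mu alpha : ℝ) (hlam : 0 < lam) (hmu : 0 < mu)
    (eta : Ω → ℕ → ℕ) (hEta : IsCatastropheChain lam mu eta)
    (t : ℝ)
    (N : ℝ → Ω → ℕ)
    (hN : ∀ T > (0 : ℝ), IsPoissonRV (alpha * (t * T)) (N T))
    (hInd : ∀ T > (0 : ℝ), IndepFun (N T) eta ℙ)
    (ε : ℝ) (hε : 0 < ε) :
    Filter.Tendsto (fun T : ℝ => ℙ {ω | ε * T < (eta ω (N T ω) : ℝ)})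
      Filter.atTop (nhds 0) := by
  set C := ENNReal.ofReal (2 * (lam + mu) / mu)
  have hpath : Measurable eta := measurable_pi_lambda _ hEta.1
  have hmean : ∀ T > 0, ∫⁻ ω, (eta ω (N T ω) : ℝ≥0∞) ∂ℙ ≤ C := fun T hT => by
    have := Measure.isProbabilityMeasure_map (μ := (ℙ : Measure Ω)) (hN T hT).1.aemeasurable
    rw [lintegral_apply_index_of_indepFun (hN T hT).1 hpath (hInd T hT).symm
      (measurable_of_countable _)]
    calc _ ≤ ∫⁻ _, C ∂(ℙ : Measure Ω).map (N T) :=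
          lintegral_mono fun k => hEta.lintegral_le hlam hmu k
      _ = C := by simp
  have hmarkov : ∀ T > 0,
      ℙ {ω | ε * T < (eta ω (N T ω) : ℝ)} ≤ C / ENNReal.ofReal (ε * T) := fun T hT =>
    calc _ ≤ ℙ {ω | ENNReal.ofReal (ε * T) ≤ eta ω (N T ω)} := measure_mono fun ω hω => by
            rw [Set.mem_ofPred_eq, ← ENNReal.ofReal_natCast]
            exact ENNReal.ofReal_le_ofReal hω.le
      _ ≤ (∫⁻ ω, (eta ω (N T ω) : ℝ≥0∞) ∂ℙ) / ENNReal.ofReal (ε * T) :=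
          meas_ge_le_lintegral_div ((measurable_of_countable _).comp
            (measurable_apply_index (hN T hT).1 hpath)).aemeasurable
            (by simp [hε, hT]) ENNReal.ofReal_ne_top
      _ ≤ C / ENNReal.ofReal (ε * T) := by gcongr; exact hmean T hT
  have hlim : Tendsto (fun T : ℝ => C / ENNReal.ofReal (ε * T)) atTop (nhds 0) := by
    have hinv : Tendsto (fun T : ℝ => (ENNReal.ofReal (ε * T))⁻¹) atTop (nhds 0) := by
      rw [← ENNReal.inv_top, tendsto_inv_iff]
      exact ENNReal.tendsto_ofReal_atTop.comp (tendsto_id.const_mul_atTop hε)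
    simpa [C, div_eq_mul_inv] using ENNReal.Tendsto.const_mul hinv (Or.inr ENNReal.ofReal_ne_top)
  exact tendsto_of_tendsto_of_tendsto_of_le_of_le' tendsto_const_nhds hlim
    (Eventually.of_forall fun _ => bot_le) ((eventually_gt_atTop 0).mono hmarkov)

theorem lln_population_catastrophes
    {Ω : Type*} [MeasureSpace Ω] [IsProbabilityMeasure (ℙ : Measure Ω)]
    (lam mu alpha : ℝ) (hlam : 0 < lam) (hmu : 0 < mu) (halpha : 0 < alpha)
    (eta : Ω → ℕ → ℕ) (hEta : IsCatastropheChain lam mu eta)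
    (t : ℝ) (ht : t ∈ Set.Ioc (0 : ℝ) 1)
    (N : ℝ → Ω → ℕ)
    (hN : ∀ T > (0 : ℝ), IsPoissonRV (alpha * (t * T)) (N T))
    (hInd : ∀ T > (0 : ℝ), IndepFun (N T) eta ℙ)
    (ε : ℝ) (hε : 0 < ε) :
    Filter.Tendsto (fun T : ℝ => ℙ {ω | ε * T < (eta ω (N T ω) : ℝ)})
      Filter.atTop (nhds 0) :=
  lln_population_catastrophes_general lam mu alpha hlam hmu eta hEta t N hN hInd ε hε
end

section
/- Fix λ, μ, α > 0 and define I : ℝ → [0,∞] by I(x) = ∞ for x < 0, I(x) = x·ln((λ+μ)/λ) for 0 ≤ x < α, and I(x) = x·ln(x(λ+μ)/(αλ)) − x + α for x ≥ α. Then for every x > 0, sup_{z ∈ (0,1)} sup_{y ≥ x} ( −y·ln( y(λ+μ)/(αλz) ) + y − αz ) = −I(x). -/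
/-!
With `K = (λ + μ) / (α λ)` the objective is `-y log (y K / z) + y - α z`. For every `t > 0`,
the inequality `y log (b / y) ≤ b - y` with `b = t z` bounds it by `-y log (t K) + (t - α) z`.
Taking `t = α` gives `-x log (α K)`, attained at `y = x`, `z = x / α` when `x < α`;
taking `t = x` gives `-x log (x K) + x - α` when `α ≤ x`, approached at `y = x`, `z → 1`.
-/

open Real Filter Topology Set

lemma Real.mul_log_div_le_sub {a b : ℝ} (ha : 0 < a) (hb : 0 < b) :
    a * log (b / a) ≤ b - a := by
  have h := mul_le_mul_of_nonneg_left (log_le_sub_one_of_pos (div_pos hb ha)) ha.le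
  rwa [mul_sub, mul_div_cancel₀ _ ha.ne', mul_one] at h

lemma le_biSup_of_tendsto {α β : Type*} [CompleteLattice β] [TopologicalSpace β]
    [ClosedIicTopology β] {f : α → β} {l : Filter α} [l.NeBot] {s : Set α} {b : β}
    (hf : Tendsto f l (𝓝 b)) (hs : s ∈ l) : b ≤ ⨆ a ∈ s, f a :=
  le_of_tendsto hf (eventually_of_mem hs fun _ ha => le_iSup₂_of_le _ ha le_rfl)

noncomputable def ldpObjective (K α z y : ℝ) : ℝ := -(y * log (y * K / z)) + y - α * z

section ldpObjective

variable {K α z y : ℝ}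

lemma ldpObjective_le (hK : 0 < K) (hz : 0 < z) (hy : 0 < y) {t : ℝ} (ht : 0 < t) :
    ldpObjective K α z y ≤ -(y * log (t * K)) + (t - α) * z := by
  have hsplit : log (y * K / z) = log (t * K) - log (t * z / y) := by
    rw [← log_div (by positivity) (by positivity)]
    congr 1
    field_simp
  have := Real.mul_log_div_le_sub hy (mul_pos ht hz)
  rw [ldpObjective, hsplit]
  linarith

lemma ldpObjective_le_of_le {x : ℝ} (hK : 1 ≤ α * K) (hα : 0 < α) (hz : 0 < z)
    (hx : 0 < x) (hy : x ≤ y) :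
    ldpObjective K α z y ≤ -(x * log (α * K)) := by
  have hK0 : 0 < K := pos_of_mul_pos_right (by linarith) hα.le
  have := ldpObjective_le (α := α) hK0 hz (hx.trans_le hy) hα
  nlinarith [log_nonneg hK]

lemma ldpObjective_le_of_le_of_le {x : ℝ} (hK : 1 ≤ α * K) (hα : 0 < α) (hz : 0 < z)
    (hz1 : z ≤ 1) (hαx : α ≤ x) (hy : x ≤ y) :
    ldpObjective K α z y ≤ -(x * log (x * K)) + x - α := by
  have hK0 : 0 < K := pos_of_mul_pos_right (by linarith) hα.le
  have hx : 0 < x := hα.trans_le hαx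
  have := ldpObjective_le (α := α) hK0 hz (hx.trans_le hy) hx
  have hxK : 1 ≤ x * K := hK.trans (by gcongr)
  nlinarith [log_nonneg hxK, mul_nonneg (sub_nonneg.2 hαx) (sub_nonneg.2 hz1)]

lemma ldpObjective_div_self {x : ℝ} (hα : α ≠ 0) (hx : x ≠ 0) :
    ldpObjective K α (x / α) x = -(x * log (α * K)) := by
  rw [ldpObjective, mul_div_cancel₀ _ hα]
  field_simp
  ring_nf

lemma tendsto_ldpObjective_one {x : ℝ} (hxK : x * K ≠ 0) :
    Tendsto (fun z => ldpObjective K α z x) (𝓝 1) (𝓝 (-(x * log (x * K)) + x - α)) := by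
  have hcont : ContinuousAt (fun z => ldpObjective K α z x) 1 := by
    unfold ldpObjective
    fun_prop (disch := simp [hxK])
  simpa [ldpObjective] using hcont.tendsto

end ldpObjective

lemma iSup_ldpObjective_of_lt {K α x : ℝ} (hK : 1 ≤ α * K) (hx : 0 < x) (hxα : x < α) :
    ⨆ z ∈ Ioo (0 : ℝ) 1, ⨆ y ∈ Ici x, (ldpObjective K α z y : EReal)
      = ((-(x * log (α * K)) : ℝ) : EReal) := by
  have hα : 0 < α := hx.trans hxα
  refine le_antisymm (iSup₂_le fun z hz => iSup₂_le fun y hy => ?_) ?_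
  · exact EReal.coe_le_coe (ldpObjective_le_of_le hK hα hz.1 hx hy)
  · have hz : x / α ∈ Ioo (0 : ℝ) 1 := ⟨div_pos hx hα, (div_lt_one hα).2 hxα⟩
    refine le_iSup₂_of_le (x / α) hz (le_iSup₂_of_le x self_mem_Ici ?_)
    rw [ldpObjective_div_self hα.ne' hx.ne']

lemma iSup_ldpObjective_of_le {K α x : ℝ} (hK : 1 ≤ α * K) (hα : 0 < α) (hαx : α ≤ x) :
    ⨆ z ∈ Ioo (0 : ℝ) 1, ⨆ y ∈ Ici x, (ldpObjective K α z y : EReal)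
      = ((-(x * log (x * K)) + x - α : ℝ) : EReal) := by
  refine le_antisymm (iSup₂_le fun z hz => iSup₂_le fun y hy => ?_) ?_
  · exact EReal.coe_le_coe (ldpObjective_le_of_le_of_le hK hα hz.1 hz.2.le hαx hy)
  · have hxK : x * K ≠ 0 := (mul_pos (hα.trans_le hαx) (pos_of_mul_pos_right (by linarith) hα.le)).ne'
    have hlim := (EReal.tendsto_coe.2 (tendsto_ldpObjective_one (α := α) hxK)).mono_left
      (nhdsWithin_le_nhds (s := Iio 1))
    refine (le_biSup_of_tendsto hlim (Ioo_mem_nhdsLT zero_lt_one)).trans ?_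
    exact iSup₂_mono fun z _ => le_iSup₂_of_le x self_mem_Ici le_rfl

theorem variational_formula_rate_function
    (lam mu alpha : ℝ) (hlam : 0 < lam) (hmu : 0 < mu) (halpha : 0 < alpha)
    (x : ℝ) (hx : 0 < x) :
    (⨆ z ∈ Set.Ioo (0 : ℝ) 1, ⨆ y ∈ Set.Ici x,
        ((-(y * Real.log (y * (lam + mu) / (alpha * lam * z))) + y - alpha * z : ℝ) : EReal))
      = - rateI lam mu alpha x := by
  set K := (lam + mu) / (alpha * lam) with hKdef
  have hαK : alpha * K = (lam + mu) / lam := by rw [hKdef]; field_simp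
  have hK : 1 ≤ alpha * K := by rw [hαK, le_div_iff₀ hlam]; linarith
  have hobj : ∀ z y, -(y * log (y * (lam + mu) / (alpha * lam * z))) + y - alpha * z
      = ldpObjective K alpha z y := fun z y => by rw [ldpObjective, hKdef]; ring_nf
  simp_rw [hobj]
  rw [rateI, if_neg hx.not_gt]
  split_ifs with hxα
  · rw [iSup_ldpObjective_of_lt hK hx hxα, hαK, ← EReal.coe_neg]
  · rw [iSup_ldpObjective_of_le hK halpha (not_lt.1 hxα), ← EReal.coe_neg]
    rw [hKdef]
    ring_nf
end

section
/- Fix m > 0 and for each T > 0 let N_T be a Poisson random variable with mean mT. Then for every x with 0 < x ≤ m, lim_{T→∞} (1/T) ln P(N_T ≤ xT) = −( x·ln(x/m) − x + m ). -/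
open MeasureTheory ProbabilityTheory Filter

/-!
With `n = ⌊x T⌋₊ ≤ m T`, the Poisson weights `(m T) ^ k / k!` increase for `k ≤ n`, so
`ℙ(N_T ≤ x T)` equals `e^{-m T} (m T) ^ n / n!` up to a factor between `1` and `n + 1`.
Since `log (n + 1) = o(T)`, only the last weight matters, and Stirling's formula
`log n! = n log n - n + o(n)` together with `n / T → x` gives
`(1 / T) log ((m T) ^ n / n!) → x log (m / x) + x`.
-/

open Real Topology Finset
open scoped Nat

theorem Stirling.tendsto_log_factorial_sub_div_self :
    Tendsto (fun n : ℕ => (log n ! - (n * log n - n)) / n) atTop (𝓝 0) := by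
  have hformula : ∀ n : ℕ, n ≠ 0 →
      (log n ! - (n * log n - n)) / n =
        log (stirlingSeq n) * (n : ℝ)⁻¹ + log (2 * n) / (2 * n) := by
    intro n hn
    have hn0 : (0 : ℝ) < n := by positivity
    rw [log_stirlingSeq_formula, log_div hn0.ne' (exp_ne_zero 1), log_exp]
    field_simp
    ring
  have hseq : Tendsto (fun n : ℕ => log (stirlingSeq n) * (n : ℝ)⁻¹) atTop (𝓝 0) := by
    simpa using ((continuousAt_log (by positivity)).tendsto.comp
      tendsto_stirlingSeq_sqrt_pi).mul tendsto_inv_atTop_nhds_zero_nat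
  have hlog : Tendsto (fun n : ℕ => log (2 * n) / (2 * n)) atTop (𝓝 0) :=
    isLittleO_log_id_atTop.tendsto_div_nhds_zero.comp
      (tendsto_natCast_atTop_atTop.const_mul_atTop two_pos)
  refine (tendsto_congr' ?_).mpr (by simpa using hseq.add hlog)
  filter_upwards [eventually_ne_atTop 0] with n hn using hformula n hn

theorem pow_div_factorial_le_pow_div_factorial {μ : ℝ} {k n : ℕ} (hkn : k ≤ n)
    (hn : (n : ℝ) ≤ μ) : μ ^ k / k ! ≤ μ ^ n / n ! := by
  induction n, hkn using Nat.le_induction with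
  | base => exact le_rfl
  | succ j _ ih =>
    have hj : (j : ℝ) + 1 ≤ μ := by exact_mod_cast hn
    have hratio : 1 ≤ μ / (j + 1) := (one_le_div (by positivity)).mpr hj
    calc μ ^ k / k ! ≤ μ ^ j / j ! := ih (by linarith)
      _ ≤ μ ^ j / j ! * (μ / (j + 1)) :=
        le_mul_of_one_le_right (div_nonneg (pow_nonneg (by linarith) _) (by positivity)) hratio
      _ = μ ^ (j + 1) / (j + 1)! := by
        rw [pow_succ, Nat.factorial_succ]
        push_cast
        field_simp

theorem sum_range_succ_pow_div_factorial_le {μ : ℝ} {n : ℕ} (hn : (n : ℝ) ≤ μ) :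
    ∑ k ∈ range (n + 1), μ ^ k / k ! ≤ (n + 1) * (μ ^ n / n !) := by
  simpa using sum_le_card_nsmul (range (n + 1)) _ _ fun k hk =>
    pow_div_factorial_le_pow_div_factorial (Nat.lt_succ_iff.mp (mem_range.mp hk)) hn

namespace IsPoissonRV

variable {Ω : Type*} [MeasureSpace Ω] {μ : ℝ} {N : Ω → ℕ}

theorem toReal_measure_le (hN : IsPoissonRV μ N) (hμ : 0 ≤ μ) (n : ℕ) :
    (ℙ {ω | N ω ≤ n}).toReal = exp (-μ) * ∑ k ∈ range (n + 1), μ ^ k / k ! := by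
  have hset : {ω | N ω ≤ n} = N ⁻¹' ↑(range (n + 1)) := by
    ext ω
    simp
  have hfiber (k : ℕ) : ℙ (N ⁻¹' {k}) = ENNReal.ofReal (exp (-μ) * μ ^ k / k !) := hN.2 k
  rw [hset, ← sum_measure_preimage_singleton _ fun k _ => hN.1 (measurableSet_singleton k),
    ENNReal.toReal_sum fun k _ => by simp [hfiber], mul_sum]
  refine sum_congr rfl fun k _ => ?_
  rw [hfiber, ENNReal.toReal_ofReal (by positivity), mul_div_assoc]

end IsPoissonRV

section Asymptotics

variable {m x : ℝ} {n : ℝ → ℕ}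

theorem tendsto_atTop_of_tendsto_natCast_div (hx : 0 < x)
    (hn : Tendsto (fun T => (n T : ℝ) / T) atTop (𝓝 x)) : Tendsto n atTop atTop := by
  refine tendsto_natCast_atTop_iff.mp ((hn.pos_mul_atTop hx tendsto_id).congr' ?_)
  filter_upwards [eventually_gt_atTop 0] with T hT
  simp [hT.ne']

theorem tendsto_log_pow_div_factorial_div (hm : 0 < m) (hx : 0 < x)
    (hn : Tendsto (fun T => (n T : ℝ) / T) atTop (𝓝 x)) :
    Tendsto (fun T => log ((m * T) ^ n T / (n T)!) / T) atTop (𝓝 (x * log (m / x) + x)) := by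
  have hnat := tendsto_atTop_of_tendsto_natCast_div hx hn
  have hstirling := Stirling.tendsto_log_factorial_sub_div_self.comp hnat
  have hlim := ((hn.mul ((tendsto_const_nhds (x := log m)).sub
    ((continuousAt_log hx.ne').tendsto.comp hn))).add hn).sub (hstirling.mul hn)
  rw [zero_mul, sub_zero, ← log_div hm.ne' hx.ne'] at hlim
  refine hlim.congr' ?_
  filter_upwards [eventually_gt_atTop 0, hnat.eventually_ne_atTop 0] with T hT hnT
  have hn0 : (0 : ℝ) < n T := by positivity
  have hlog : log ((m * T) ^ n T / (n T)!) = n T * (log m + log T) - log (n T)! := by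
    rw [log_div (by positivity) (by positivity), log_pow, log_mul hm.ne' hT.ne']
  simp only [Function.comp_apply]
  rw [hlog, log_div hn0.ne' hT.ne']
  field_simp
  ring

theorem tendsto_log_add_one_div (hx : 0 < x)
    (hn : Tendsto (fun T => (n T : ℝ) / T) atTop (𝓝 x)) :
    Tendsto (fun T => log (n T + 1) / T) atTop (𝓝 0) := by
  have hn1 : Tendsto (fun T => ((n T : ℝ) + 1) / T) atTop (𝓝 x) := by
    have hinv : Tendsto (fun T : ℝ => 1 / T) atTop (𝓝 0) :=
      tendsto_const_nhds.div_atTop tendsto_id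
    refine (add_zero x ▸ hn.add hinv).congr' ?_
    filter_upwards with T using (add_div _ _ _).symm
  have hlog := isLittleO_log_id_atTop.tendsto_div_nhds_zero.comp <|
    tendsto_atTop_add_const_right _ 1 <|
      tendsto_natCast_atTop_iff.mpr (tendsto_atTop_of_tendsto_natCast_div hx hn)
  refine (zero_mul x ▸ hlog.mul hn1).congr' ?_
  filter_upwards [eventually_gt_atTop 0] with T hT
  have hpos : (0 : ℝ) < n T + 1 := by positivity
  simp only [Function.comp_apply, id]
  field_simp

theorem tendsto_log_sum_pow_div_factorial_div (hm : 0 < m) (hx : 0 < x)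
    (hn : Tendsto (fun T => (n T : ℝ) / T) atTop (𝓝 x))
    (hnm : ∀ᶠ T in atTop, (n T : ℝ) ≤ m * T) :
    Tendsto (fun T => log (∑ k ∈ range (n T + 1), (m * T) ^ k / k !) / T) atTop
      (𝓝 (x * log (m / x) + x)) := by
  have hlast := tendsto_log_pow_div_factorial_div hm hx hn
  refine tendsto_of_tendsto_of_tendsto_of_le_of_le' hlast
    (zero_add (x * log (m / x) + x) ▸ (tendsto_log_add_one_div hx hn).add hlast) ?_ ?_
  · filter_upwards [eventually_gt_atTop 0] with T hT
    gcongr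
    exact single_le_sum (f := fun k => (m * T) ^ k / k !) (fun k _ => by positivity)
        (self_mem_range_succ (n T))
  · filter_upwards [eventually_gt_atTop 0, hnm] with T hT hnT
    rw [← add_div, ← log_mul (by positivity) (by positivity)]
    gcongr
    exact sum_range_succ_pow_div_factorial_le hnT

end Asymptotics

theorem poisson_lower_tail_log_asymptotics_general
    {Ω : Type*} [MeasureSpace Ω]
    (m : ℝ) (hm : 0 < m)
    (N : ℝ → Ω → ℕ) (hN : ∀ T > (0 : ℝ), IsPoissonRV (m * T) (N T))
    (x : ℝ) (hx0 : 0 < x) (hx : x ≤ m) :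
    Filter.Tendsto
      (fun T : ℝ => (1 / T) * Real.log (ℙ {ω | (N T ω : ℝ) ≤ x * T}).toReal)
      Filter.atTop (nhds (-(x * Real.log (x / m) - x + m))) := by
  set n : ℝ → ℕ := fun T => ⌊x * T⌋₊
  have hnm : ∀ᶠ T in atTop, (n T : ℝ) ≤ m * T := by
    filter_upwards [eventually_ge_atTop 0] with T hT
    exact (Nat.floor_le (by positivity)).trans (by gcongr)
  have hsum := tendsto_log_sum_pow_div_factorial_div hm hx0
    (tendsto_nat_floor_mul_div_atTop hx0.le) hnm
  have hlog : ∀ᶠ T in atTop, -m + log (∑ k ∈ range (n T + 1), (m * T) ^ k / k !) / T =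
      1 / T * log (ℙ {ω | (N T ω : ℝ) ≤ x * T}).toReal := by
    filter_upwards [eventually_gt_atTop 0] with T hT
    have hevent : {ω | (N T ω : ℝ) ≤ x * T} = {ω | N T ω ≤ n T} := by
      ext ω
      exact (Nat.le_floor_iff (mul_pos hx0 hT).le).symm
    rw [hevent, (hN T hT).toReal_measure_le (by positivity),
      log_mul (exp_ne_zero _) (by positivity), log_exp]
    field_simp
  convert (tendsto_const_nhds.add hsum).congr' hlog using 2
  rw [log_div hx0.ne' hm.ne', log_div hm.ne' hx0.ne']
  ring

theorem poisson_lower_tail_log_asymptotics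
    {Ω : Type*} [MeasureSpace Ω] [IsProbabilityMeasure (ℙ : Measure Ω)]
    (m : ℝ) (hm : 0 < m)
    (N : ℝ → Ω → ℕ) (hN : ∀ T > (0 : ℝ), IsPoissonRV (m * T) (N T))
    (x : ℝ) (hx0 : 0 < x) (hx : x ≤ m) :
    Filter.Tendsto
      (fun T : ℝ => (1 / T) * Real.log (ℙ {ω | (N T ω : ℝ) ≤ x * T}).toReal)
      Filter.atTop (nhds (-(x * Real.log (x / m) - x + m))) :=
  poisson_lower_tail_log_asymptotics_general m hm N hN x hx0 hx
end
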